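/- arXiv:2507.17545 — 3 statements merged into one kernel-verified Lean document; each statement's English description precedes it below -/
import Mathlib

section
/- For exact DCA iterates x_0, ..., x_{T+1} (where each x_{t+1} minimizes the surrogate h_t over P), the average of the DC gaps satisfies (1/(T+1)) Σ_{t=0}^T G(x_t) ≤ (φ(x_0) - φ(x*))/(T+1), where x* minimizes φ over P; in particular min_{0≤t≤T} G(x_t) = O(1/T). -/
/-!
Since `g` is convex, its linearization at `xₜ` lies below it, so the surrogate `hₜ` majorizes
`φ` and agrees with it at `xₜ`. Hence the gap `G(xₜ) = φ(xₜ) - min_P hₜ = φ(xₜ) - hₜ(xₜ₊₁)` is at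
most the decrease `φ(xₜ) - φ(xₜ₊₁)`, and these decreases telescope to `φ(x₀) - φ(x_{T+1})`,
which is at most `φ(x₀) - φ(x*)`.
-/

open RealInnerProductSpace Finset

theorem ConvexOn.add_fderiv_le {E : Type*} [NormedAddCommGroup E] [NormedSpace ℝ E]
    {s : Set E} {f : E → ℝ} {f' : E →L[ℝ] ℝ} {a y : E} (hf : ConvexOn ℝ s f)
    (ha : a ∈ s) (hy : y ∈ s) (hfa : HasFDerivAt f f' a) :
    f a + f' (y - a) ≤ f y := by
  have hline : ConvexOn ℝ (Set.Icc (0 : ℝ) 1) (f ∘ AffineMap.lineMap a y) :=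
    (hf.comp_affineMap _).subset (fun _ ht => hf.1.lineMap_mem ha hy ht) (convex_Icc 0 1)
  have hderiv : HasDerivAt (f ∘ AffineMap.lineMap (k := ℝ) a y) (f' (y - a)) 0 := by
    have hfa' : HasFDerivAt f f' (AffineMap.lineMap a y (0 : ℝ)) := by simpa using hfa
    exact hfa'.comp_hasDerivAt 0 AffineMap.hasDerivAt_lineMap
  have hslope := hline.le_slope_of_hasDerivAt (by simp) (by simp) zero_lt_one hderiv
  simp only [slope, Function.comp_apply, AffineMap.lineMap_apply_zero,
    AffineMap.lineMap_apply_one, sub_zero, inv_one, one_smul, vsub_eq_sub] at hslope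
  linarith

theorem ConvexOn.add_inner_gradient_le {F : Type*} [NormedAddCommGroup F]
    [InnerProductSpace ℝ F] [CompleteSpace F] {s : Set F} {g : F → ℝ} {a y : F}
    (hg : ConvexOn ℝ s g) (ha : a ∈ s) (hy : y ∈ s) (hga : DifferentiableAt ℝ g a) :
    g a + ⟪gradient g a, y - a⟫ ≤ g y := by
  simpa [InnerProductSpace.toDual_apply_apply] using
    hg.add_fderiv_le ha hy hga.hasGradientAt.hasFDerivAt

theorem isGreatest_gap_le_sub_of_majorant {α : Type*} {P : Set α} {φ h : α → ℝ} {a b : α}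
    {G : ℝ} (hG : IsGreatest ((fun y => φ a - h y) '' P) G) (hb : ∀ y ∈ P, h b ≤ h y)
    (hmaj : φ b ≤ h b) : G ≤ φ a - φ b := by
  obtain ⟨⟨y, hyP, rfl⟩, -⟩ := hG
  linarith [hb y hyP]

theorem Finset.sum_range_le_sub_of_le_sub {G u : ℕ → ℝ} {N : ℕ}
    (h : ∀ t < N, G t ≤ u t - u (t + 1)) : ∑ t ∈ range N, G t ≤ u 0 - u N := by
  rw [← sum_range_sub']
  exact sum_le_sum fun t ht => h t (mem_range.mp ht)

theorem Finset.exists_lt_le_div_of_sum_range_le {G : ℕ → ℝ} {N : ℕ} {c : ℝ} (hN : 0 < N)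
    (h : ∑ t ∈ range N, G t ≤ c) : ∃ t < N, G t ≤ c / N := by
  have hconst : ∑ _t ∈ range N, c / N = c := by
    rw [sum_const, card_range, nsmul_eq_mul]
    field_simp
  obtain ⟨t, ht, hGt⟩ := exists_le_of_sum_le (nonempty_range_iff.mpr hN.ne') (h.trans hconst.ge)
  exact ⟨t, mem_range.mp ht, hGt⟩

theorem stmt3_general {n : ℕ} (P : Set (EuclideanSpace ℝ (Fin n)))
    (f g : EuclideanSpace ℝ (Fin n) → ℝ)
    (hg : ConvexOn ℝ Set.univ g) (hgd : Differentiable ℝ g)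
    (T : ℕ) (x : ℕ → EuclideanSpace ℝ (Fin n))
    (hxP : ∀ t ≤ T + 1, x t ∈ P)
    (φ : EuclideanSpace ℝ (Fin n) → ℝ)
    (hφ : ∀ y, φ y = f y - g y)
    (ht : ℕ → EuclideanSpace ℝ (Fin n) → ℝ)
    (hht : ∀ t y, ht t y = f y - g (x t) - ⟪gradient g (x t), y - x t⟫)
    (hmin : ∀ t ≤ T, ∀ y ∈ P, ht t (x (t + 1)) ≤ ht t y)
    (G : ℕ → ℝ)
    (hG : ∀ t ≤ T, IsGreatest ((fun y => φ (x t) - ht t y) '' P) (G t))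
    (xstar : EuclideanSpace ℝ (Fin n))
    (hstar : xstar ∈ P ∧ ∀ y ∈ P, φ xstar ≤ φ y) :
    (∑ t ∈ Finset.range (T + 1), G t) / (T + 1 : ℝ)
      ≤ (φ (x 0) - φ xstar) / (T + 1 : ℝ) ∧
    ∃ t ≤ T, G t ≤ (φ (x 0) - φ xstar) / (T + 1 : ℝ) := by
  have hmajorant : ∀ t y, φ y ≤ ht t y := fun t y => by
    rw [hφ, hht]
    linarith [hg.add_inner_gradient_le (Set.mem_univ (x t)) (Set.mem_univ y) (hgd (x t))]
  have hdescent : ∀ t < T + 1, G t ≤ φ (x t) - φ (x (t + 1)) := fun t htT =>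
    isGreatest_gap_le_sub_of_majorant (hG t (by omega)) (hmin t (by omega)) (hmajorant t _)
  have hsum : ∑ t ∈ range (T + 1), G t ≤ φ (x 0) - φ xstar :=
    (sum_range_le_sub_of_le_sub hdescent).trans
      (by linarith [hstar.2 _ (hxP (T + 1) le_rfl)])
  obtain ⟨t, htT, hGt⟩ := exists_lt_le_div_of_sum_range_le T.succ_pos hsum
  refine ⟨div_le_div_of_nonneg_right hsum (by positivity), t, by omega, ?_⟩
  exact_mod_cast hGt

/-- For exact DCA iterates, the average DC gap is at most `(φ(x₀) - φ(x*))/(T+1)`. -/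
theorem stmt3 {n : ℕ} (P : Set (EuclideanSpace ℝ (Fin n)))
    (hPc : IsCompact P) (hPconv : Convex ℝ P)
    (f g : EuclideanSpace ℝ (Fin n) → ℝ)
    (hf : ConvexOn ℝ Set.univ f) (hfd : Differentiable ℝ f)
    (hg : ConvexOn ℝ Set.univ g) (hgd : Differentiable ℝ g)
    (T : ℕ) (x : ℕ → EuclideanSpace ℝ (Fin n))
    (hxP : ∀ t ≤ T + 1, x t ∈ P)
    (φ : EuclideanSpace ℝ (Fin n) → ℝ)
    (hφ : ∀ y, φ y = f y - g y)
    (ht : ℕ → EuclideanSpace ℝ (Fin n) → ℝ)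
    (hht : ∀ t y, ht t y = f y - g (x t) - ⟪gradient g (x t), y - x t⟫)
    (hmin : ∀ t ≤ T, ∀ y ∈ P, ht t (x (t + 1)) ≤ ht t y)
    (G : ℕ → ℝ)
    (hG : ∀ t ≤ T, IsGreatest ((fun y => φ (x t) - ht t y) '' P) (G t))
    (xstar : EuclideanSpace ℝ (Fin n))
    (hstar : xstar ∈ P ∧ ∀ y ∈ P, φ xstar ≤ φ y) :
    (∑ t ∈ Finset.range (T + 1), G t) / (T + 1 : ℝ)
      ≤ (φ (x 0) - φ xstar) / (T + 1 : ℝ) ∧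
    ∃ t ≤ T, G t ≤ (φ (x 0) - φ xstar) / (T + 1 : ℝ) :=
  stmt3_general P f g hg hgd T x hxP φ hφ ht hht hmin G hG xstar hstar
end

section
/- Suppose each DCA iterate x_{t+1} ∈ P satisfies the adaptive stopping criterion h_t(x_{t+1}) ≤ φ(x_t) - ⟨∇h_t(x_{t+1}), x_{t+1} - v_{t+1}⟩, where v_{t+1} maximizes ⟨∇h_t(x_{t+1}), x_{t+1} - v⟩ over v ∈ P. Then (1/2)·G(x_t) ≤ φ(x_t) - φ(x_{t+1}) for every t. -/
/-! The linearization `h_t` of `φ = f - g` at `x_t` is a convex majorant of `φ`, by the gradient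
inequality for `g`. The gradient inequality for `h_t` at `x_{t+1}` gives, for every `x ∈ P`,
`h_t(x) ≥ h_t(x_{t+1}) - ⟨∇h_t(x_{t+1}), x_{t+1} - v_{t+1}⟩`, and the stopping criterion bounds the
subtracted Frank–Wolfe gap by `φ(x_t) - h_t(x_{t+1})`. Hence
`G(x_t) ≤ 2 (φ(x_t) - h_t(x_{t+1})) ≤ 2 (φ(x_t) - φ(x_{t+1}))`. -/

open RealInnerProductSpace Set

section FirstOrder

variable {E : Type*} [NormedAddCommGroup E] [NormedSpace ℝ E] {s : Set E} {f : E → ℝ}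
  {f' : E →L[ℝ] ℝ} {x y : E}

theorem ConvexOn.add_fderiv_sub_le (hf : ConvexOn ℝ s f) (hx : x ∈ s) (hy : y ∈ s)
    (hf' : HasFDerivAt f f' x) : f x + f' (y - x) ≤ f y := by
  let L : ℝ →ᵃ[ℝ] E := AffineMap.lineMap x y
  have hL : HasDerivAt (f ∘ L) (f' (y - x)) 0 := by
    have hf'L : HasFDerivAt f f' (L 0) := by simpa [L] using hf'
    exact hf'L.comp_hasDerivAt 0 (by simpa [L] using L.hasDerivAt (x := 0))
  have := (hf.comp_affineMap L).le_slope_of_hasDerivAt (x := 0) (y := 1)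
    (by simpa [L] using hx) (by simpa [L] using hy) one_pos hL
  simp only [slope_def_field, Function.comp_apply, L, AffineMap.lineMap_apply_zero,
    AffineMap.lineMap_apply_one, sub_zero, div_one] at this
  linarith

end FirstOrder

section Gradient

variable {E : Type*} [NormedAddCommGroup E] [InnerProductSpace ℝ E] {s : Set E} {f : E → ℝ}

theorem ConvexOn.sub_const_sub_inner (hf : ConvexOn ℝ s f) (a b : E) (c : ℝ) :
    ConvexOn ℝ s fun x => f x - c - ⟪a, x - b⟫ := by
  refine ((hf.add ((innerₛₗ ℝ (-a)).convexOn hf.1)).add_const (⟪a, b⟫ - c)).congr fun x _ => ?_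
  simp only [Pi.add_apply, innerₛₗ_apply_apply, inner_neg_left,
    inner_sub_right]
  ring

theorem ConvexOn.add_inner_gradient_sub_le [CompleteSpace E] {x y : E} (hf : ConvexOn ℝ s f)
    (hx : x ∈ s) (hy : y ∈ s) (hfx : DifferentiableAt ℝ f x) :
    f x + ⟪gradient f x, y - x⟫ ≤ f y := by
  simpa using hf.add_fderiv_sub_le hx hy (hasGradientAt_iff_hasFDerivAt.mp hfx.hasGradientAt)

end Gradient

theorem stmt5_general {n : ℕ} (P : Set (EuclideanSpace ℝ (Fin n)))
    (f g : EuclideanSpace ℝ (Fin n) → ℝ)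
    (hf : ConvexOn ℝ Set.univ f) (hfd : Differentiable ℝ f)
    (hg : ConvexOn ℝ Set.univ g) (hgd : Differentiable ℝ g)
    (xt xt1 : EuclideanSpace ℝ (Fin n))
    (φ ht : EuclideanSpace ℝ (Fin n) → ℝ)
    (hφ : ∀ x, φ x = f x - g x)
    (hht : ∀ x, ht x = f x - g xt - ⟪gradient g xt, x - xt⟫)
    (v : EuclideanSpace ℝ (Fin n))
    (hv : v ∈ P ∧ ∀ w ∈ P,
      ⟪gradient ht xt1, xt1 - w⟫ ≤ ⟪gradient ht xt1, xt1 - v⟫)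
    (hcrit : ht xt1 ≤ φ xt - ⟪gradient ht xt1, xt1 - v⟫)
    (G : ℝ)
    (hG : IsGreatest ((fun x => φ xt - ht x) '' P) G) :
    (1 / 2 : ℝ) * G ≤ φ xt - φ xt1 := by
  obtain ⟨xs, hxs, rfl⟩ := hG.1
  have hht_eq : ht = fun x => f x - g xt - ⟪gradient g xt, x - xt⟫ := funext hht
  have hht_conv : ConvexOn ℝ univ ht := hht_eq ▸ hf.sub_const_sub_inner _ _ _
  have hht_diff : DifferentiableAt ℝ ht xt1 := hht_eq ▸ ((hfd xt1).sub_const _).sub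
    ((differentiableAt_const _).inner ℝ (differentiableAt_id.sub_const _))
  have hmajorant : φ xt1 ≤ ht xt1 := by
    have := hg.add_inner_gradient_sub_le (mem_univ xt) (mem_univ xt1) (hgd xt)
    rw [hφ, hht]
    linarith
  have htangent := hht_conv.add_inner_gradient_sub_le (mem_univ xt1) (mem_univ xs) hht_diff
  have hgap := hv.2 xs hxs
  rw [← neg_sub xt1 xs, inner_neg_right] at htangent
  linarith

/-- Under the adaptive stopping criterion, half the DC gap lower-bounds the primal progress. -/
theorem stmt5 {n : ℕ} (P : Set (EuclideanSpace ℝ (Fin n)))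
    (hPc : IsCompact P) (hPconv : Convex ℝ P)
    (f g : EuclideanSpace ℝ (Fin n) → ℝ)
    (hf : ConvexOn ℝ Set.univ f) (hfd : Differentiable ℝ f)
    (hg : ConvexOn ℝ Set.univ g) (hgd : Differentiable ℝ g)
    (xt xt1 : EuclideanSpace ℝ (Fin n)) (hxt : xt ∈ P) (hxt1 : xt1 ∈ P)
    (φ ht : EuclideanSpace ℝ (Fin n) → ℝ)
    (hφ : ∀ x, φ x = f x - g x)
    (hht : ∀ x, ht x = f x - g xt - ⟪gradient g xt, x - xt⟫)
    (v : EuclideanSpace ℝ (Fin n))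
    (hv : v ∈ P ∧ ∀ w ∈ P,
      ⟪gradient ht xt1, xt1 - w⟫ ≤ ⟪gradient ht xt1, xt1 - v⟫)
    (hcrit : ht xt1 ≤ φ xt - ⟪gradient ht xt1, xt1 - v⟫)
    (G : ℝ)
    (hG : IsGreatest ((fun x => φ xt - ht x) '' P) G) :
    (1 / 2 : ℝ) * G ≤ φ xt - φ xt1 :=
  stmt5_general P f g hf hfd hg hgd xt xt1 φ ht hφ hht v hv hcrit G hG
end

section
/- Under the adaptive stopping criterion h_t(x_{t+1}) ≤ φ(x_t) - ⟨∇h_t(x_{t+1}), x_{t+1} - v_{t+1}⟩ for all t = 0,...,T (with v_{t+1} a Frank-Wolfe vertex of ∇h_t(x_{t+1}) over P), the minimum DC gap satisfies min_{0≤t≤T} G(x_t) ≤ 2(φ(x_0) - φ(x*))/(T+1). -/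
/-!
Each DCA step majorizes `φ = f - g` by the convex model `h_t`, which touches `φ` at `x_t`. Convexity
of `h_t` bounds the DC gap at `x_t` by `φ(x_t) - h_t(x_{t+1})` plus the Frank–Wolfe gap of `h_t` at
`x_{t+1}`, and the stopping criterion bounds the latter by the former; with `φ ≤ h_t` this gives
`G(x_t) ≤ 2 (φ(x_t) - φ(x_{t+1}))`. Summing telescopes to `2 (φ(x_0) - φ(x*))`, and the minimum
is at most the average.
-/

open RealInnerProductSpace Set

section

variable {E : Type*} [NormedAddCommGroup E] [InnerProductSpace ℝ E] [CompleteSpace E]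

/-- The paper's `h_t`, with `a = x_t`. -/
noncomputable def dcLinearization (f g : E → ℝ) (a y : E) : ℝ :=
  f y - g a - ⟪gradient g a, y - a⟫

theorem ConvexOn.add_inner_gradient_le_s6 {F : E → ℝ} (hF : ConvexOn ℝ univ F) {a : E}
    (hFa : DifferentiableAt ℝ F a) (b : E) : F a + ⟪gradient F a, b - a⟫ ≤ F b := by
  set ℓ : ℝ →ᵃ[ℝ] E := AffineMap.lineMap a b
  have hline : ConvexOn ℝ univ (F ∘ ℓ) := by simpa using hF.comp_affineMap ℓ
  have hderiv : HasDerivAt (F ∘ ℓ) ⟪gradient F a, b - a⟫ 0 := by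
    have hFa' : HasFDerivAt F (fderiv ℝ F a) (ℓ 0) := by simpa [ℓ] using hFa.hasFDerivAt
    simpa [inner_gradient_left] using hFa'.comp_hasDerivAt 0 AffineMap.hasDerivAt_lineMap
  have := hline.le_slope_of_hasDerivAt (mem_univ 0) (mem_univ 1) one_pos hderiv
  simp only [slope_def_field, Function.comp_apply, ℓ, AffineMap.lineMap_apply_zero,
    AffineMap.lineMap_apply_one, sub_zero, div_one] at this
  linarith

theorem convexOn_dcLinearization {f : E → ℝ} (hf : ConvexOn ℝ univ f) (g : E → ℝ) (a : E) :
    ConvexOn ℝ univ (dcLinearization f g a) := by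
  have := (hf.sub ((innerₛₗ ℝ (gradient g a)).concaveOn convex_univ)).add_const
    (⟪gradient g a, a⟫ - g a)
  refine this.congr fun y _ => ?_
  simp only [dcLinearization, inner_sub_right, Pi.add_apply, Pi.sub_apply, innerₛₗ_apply_apply]
  ring

theorem differentiable_dcLinearization {f : E → ℝ} (hf : Differentiable ℝ f) (g : E → ℝ) (a : E) :
    Differentiable ℝ (dcLinearization f g a) := by
  unfold dcLinearization
  exact (hf.sub_const _).sub ((differentiable_const _).inner ℝ (differentiable_id.sub_const a))

theorem sub_le_dcLinearization (f : E → ℝ) {g : E → ℝ} (hg : ConvexOn ℝ univ g) {a : E}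
    (hga : DifferentiableAt ℝ g a) (y : E) : f y - g y ≤ dcLinearization f g a y := by
  have := hg.add_inner_gradient_le_s6 hga y
  unfold dcLinearization
  linarith

theorem ConvexOn.sub_le_two_mul_sub_of_inner_gradient_le {h : E → ℝ} (hh : ConvexOn ℝ univ h)
    {b : E} (hhb : DifferentiableAt ℝ h b) {P : Set E} {c : ℝ}
    (hgap : ∀ w ∈ P, ⟪gradient h b, b - w⟫ ≤ c - h b) {w : E} (hw : w ∈ P) :
    c - h w ≤ 2 * (c - h b) := by
  have htangent := hh.add_inner_gradient_le_s6 hhb w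
  have hflip : ⟪gradient h b, w - b⟫ = -⟪gradient h b, b - w⟫ := by
    rw [← inner_neg_right, neg_sub]
  linarith [hgap w hw]

end

theorem exists_le_mul_sub_div_of_le_mul_sub {u G : ℕ → ℝ} {c m : ℝ} {T : ℕ} (hc : 0 ≤ c)
    (hG : ∀ t ≤ T, G t ≤ c * (u t - u (t + 1))) (hm : m ≤ u (T + 1)) :
    ∃ t ≤ T, G t ≤ c * (u 0 - m) / (T + 1 : ℝ) := by
  have hsum : ∑ t ∈ Finset.range (T + 1), G t ≤
      ∑ _t ∈ Finset.range (T + 1), c * (u 0 - m) / (T + 1 : ℝ) := calc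
    ∑ t ∈ Finset.range (T + 1), G t ≤ ∑ t ∈ Finset.range (T + 1), c * (u t - u (t + 1)) :=
      Finset.sum_le_sum fun t ht => hG t (Nat.lt_succ_iff.mp (Finset.mem_range.mp ht))
    _ = c * (u 0 - u (T + 1)) := by rw [← Finset.mul_sum, Finset.sum_range_sub']
    _ ≤ c * (u 0 - m) := by gcongr
    _ = ∑ _t ∈ Finset.range (T + 1), c * (u 0 - m) / (T + 1 : ℝ) := by
      rw [Finset.sum_const, Finset.card_range, nsmul_eq_mul]
      push_cast
      field_simp
  obtain ⟨t, ht, hle⟩ := Finset.exists_le_of_sum_le Finset.nonempty_range_add_one hsum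
  exact ⟨t, Nat.lt_succ_iff.mp (Finset.mem_range.mp ht), hle⟩

theorem stmt6_general {n : ℕ} (P : Set (EuclideanSpace ℝ (Fin n)))
    (f g : EuclideanSpace ℝ (Fin n) → ℝ)
    (hf : ConvexOn ℝ Set.univ f) (hfd : Differentiable ℝ f)
    (hg : ConvexOn ℝ Set.univ g) (hgd : Differentiable ℝ g)
    (T : ℕ) (x : ℕ → EuclideanSpace ℝ (Fin n))
    (hxP : ∀ t ≤ T + 1, x t ∈ P)
    (φ : EuclideanSpace ℝ (Fin n) → ℝ)
    (hφ : ∀ y, φ y = f y - g y)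
    (ht : ℕ → EuclideanSpace ℝ (Fin n) → ℝ)
    (hht : ∀ t y, ht t y = f y - g (x t) - ⟪gradient g (x t), y - x t⟫)
    (v : ℕ → EuclideanSpace ℝ (Fin n))
    (hv : ∀ t ≤ T, v (t + 1) ∈ P ∧ ∀ w ∈ P,
      ⟪gradient (ht t) (x (t + 1)), x (t + 1) - w⟫ ≤
        ⟪gradient (ht t) (x (t + 1)), x (t + 1) - v (t + 1)⟫)
    (hcrit : ∀ t ≤ T, ht t (x (t + 1)) ≤
      φ (x t) - ⟪gradient (ht t) (x (t + 1)), x (t + 1) - v (t + 1)⟫)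
    (G : ℕ → ℝ)
    (hG : ∀ t ≤ T, IsGreatest ((fun y => φ (x t) - ht t y) '' P) (G t))
    (xstar : EuclideanSpace ℝ (Fin n))
    (hstar : xstar ∈ P ∧ ∀ y ∈ P, φ xstar ≤ φ y) :
    ∃ t ≤ T, G t ≤ 2 * (φ (x 0) - φ xstar) / (T + 1 : ℝ) := by
  have hmodel : ∀ t, ht t = dcLinearization f g (x t) := fun t => funext (hht t)
  have hstep : ∀ t ≤ T, G t ≤ 2 * (φ (x t) - φ (x (t + 1))) := by
    intro t htT
    obtain ⟨w, hwP, hw⟩ := (hG t htT).1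
    have hgap : ∀ y ∈ P,
        ⟪gradient (ht t) (x (t + 1)), x (t + 1) - y⟫ ≤ φ (x t) - ht t (x (t + 1)) :=
      fun y hy => by linarith [(hv t htT).2 y hy, hcrit t htT]
    rw [hmodel] at hgap hw
    have hdesc := (convexOn_dcLinearization hf g (x t)).sub_le_two_mul_sub_of_inner_gradient_le
      (differentiable_dcLinearization hfd g (x t) _) hgap hwP
    have hmaj := sub_le_dcLinearization f hg (hgd (x t)) (x (t + 1))
    rw [← hφ] at hmaj
    linarith
  exact exists_le_mul_sub_div_of_le_mul_sub zero_le_two hstep (hstar.2 _ (hxP _ le_rfl))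

/-- Adaptive-error DCA converges: `min_{0≤t≤T} G(x_t) ≤ 2(φ(x₀)-φ(x*))/(T+1)`. -/
theorem stmt6 {n : ℕ} (P : Set (EuclideanSpace ℝ (Fin n)))
    (hPc : IsCompact P) (hPconv : Convex ℝ P)
    (f g : EuclideanSpace ℝ (Fin n) → ℝ)
    (hf : ConvexOn ℝ Set.univ f) (hfd : Differentiable ℝ f)
    (hg : ConvexOn ℝ Set.univ g) (hgd : Differentiable ℝ g)
    (T : ℕ) (x : ℕ → EuclideanSpace ℝ (Fin n))
    (hxP : ∀ t ≤ T + 1, x t ∈ P)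
    (φ : EuclideanSpace ℝ (Fin n) → ℝ)
    (hφ : ∀ y, φ y = f y - g y)
    (ht : ℕ → EuclideanSpace ℝ (Fin n) → ℝ)
    (hht : ∀ t y, ht t y = f y - g (x t) - ⟪gradient g (x t), y - x t⟫)
    (v : ℕ → EuclideanSpace ℝ (Fin n))
    (hv : ∀ t ≤ T, v (t + 1) ∈ P ∧ ∀ w ∈ P,
      ⟪gradient (ht t) (x (t + 1)), x (t + 1) - w⟫ ≤
        ⟪gradient (ht t) (x (t + 1)), x (t + 1) - v (t + 1)⟫)
    (hcrit : ∀ t ≤ T, ht t (x (t + 1)) ≤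
      φ (x t) - ⟪gradient (ht t) (x (t + 1)), x (t + 1) - v (t + 1)⟫)
    (G : ℕ → ℝ)
    (hG : ∀ t ≤ T, IsGreatest ((fun y => φ (x t) - ht t y) '' P) (G t))
    (xstar : EuclideanSpace ℝ (Fin n))
    (hstar : xstar ∈ P ∧ ∀ y ∈ P, φ xstar ≤ φ y) :
    ∃ t ≤ T, G t ≤ 2 * (φ (x 0) - φ xstar) / (T + 1 : ℝ) :=
  stmt6_general P f g hf hfd hg hgd T x hxP φ hφ ht hht v hv hcrit G hG xstar hstar
end
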